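/- arXiv:math/0401164 — 4 statements merged into one kernel-verified Lean document; each statement's English description precedes it below -/
import Mathlib

section
/- Let n ≥ 2 be a natural number, k ∈ ℂ, and let Γ be the (n+1)×(n+1) complex matrix with entries (indices 1,…,n+1): Γ_{i,i} = 2(k + n) for 1 ≤ i ≤ n − 1, Γ_{n,n} = 1, Γ_{n+1,n+1} = 0, Γ_{i,i+1} = Γ_{i+1,i} = −(k + n) for 1 ≤ i ≤ n − 1, Γ_{n,n+1} = Γ_{n+1,n} = 1, and all other entries 0. Then det Γ = −n·(k + n)^{n−1}. -/
/-!
Write `c = k + n`. The last row and the last column of `Γ` each have a single nonzero entry, a `1`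
in position `n`, so two cofactor expansions reduce `det Γ` to `-det (c • A)`, where `A` is the
`(n-1) × (n-1)` Cartan matrix of type `A_{n-1}` (tridiagonal with `2` on the diagonal and `-1`
beside it). Expanding a tridiagonal determinant along its first row gives
`D_{m+2} = 2c D_{m+1} - c² D_m`, whence `D_m = (m+1) c^m`.
-/

open Matrix

namespace Matrix

variable {R : Type*} [CommRing R] {m : ℕ}

theorem det_succ_row_of_eq_zero (M : Matrix (Fin (m + 1)) (Fin (m + 1)) R) (i j : Fin (m + 1))
    (h : ∀ j', j' ≠ j → M i j' = 0) :
    M.det = (-1) ^ ((i : ℕ) + j) * M i j * (M.submatrix i.succAbove j.succAbove).det := by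
  rw [det_succ_row M i,
    Fintype.sum_eq_single j fun j' hj' => by rw [h j' hj', mul_zero, zero_mul]]

theorem det_succ_column_of_eq_zero (M : Matrix (Fin (m + 1)) (Fin (m + 1)) R) (i j : Fin (m + 1))
    (h : ∀ i', i' ≠ i → M i' j = 0) :
    M.det = (-1) ^ ((i : ℕ) + j) * M i j * (M.submatrix i.succAbove j.succAbove).det := by
  rw [det_succ_column M j,
    Fintype.sum_eq_single i fun i' hi' => by rw [h i' hi', mul_zero, zero_mul]]

theorem det_of_last_row_col_single (M : Matrix (Fin (m + 2)) (Fin (m + 2)) R)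
    (hrow : ∀ j, j ≠ (Fin.last m).castSucc → M (Fin.last _) j = 0)
    (hcol : ∀ i, i ≠ (Fin.last m).castSucc → M i (Fin.last _) = 0) :
    M.det = -(M (Fin.last _) (Fin.last m).castSucc * M (Fin.last m).castSucc (Fin.last _) *
      (M.submatrix (Fin.castSucc ∘ Fin.castSucc) (Fin.castSucc ∘ Fin.castSucc)).det) := by
  have hcols :
      (Fin.last m).castSucc.succAbove ∘ Fin.castSucc = Fin.castSucc ∘ Fin.castSucc := by
    ext j
    simp [Fin.castSucc_succAbove_castSucc]
  have hsign : ((-1 : R) ^ (m + 1 + m)) * (-1) ^ (m + m) = -1 := by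
    rw [← pow_add]
    exact Odd.neg_one_pow ⟨2 * m, by ring⟩
  rw [det_succ_row_of_eq_zero M _ _ hrow, det_succ_column_of_eq_zero _ (Fin.last m) (Fin.last m)]
  · simp only [Fin.val_last, Fin.val_castSucc, submatrix_apply, submatrix_submatrix,
      Fin.succAbove_last, hcols, Fin.succAbove_castSucc_self, Fin.succ_last]
    linear_combination (M (Fin.last (m + 1)) (Fin.last m).castSucc *
      M (Fin.last m).castSucc (Fin.last (m + 1)) *
      (M.submatrix (Fin.castSucc ∘ Fin.castSucc) (Fin.castSucc ∘ Fin.castSucc)).det) * hsign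
  · intro i hi
    simp only [submatrix_apply, Fin.succAbove_last, Fin.succAbove_castSucc_self, Fin.succ_last]
    exact hcol _ (Fin.castSucc_injective _ |>.ne hi)

def tridiagonal (a b : R) (m : ℕ) : Matrix (Fin m) (Fin m) R :=
  of fun i j => if i = j then a else if (i : ℕ) + 1 = j ∨ (j : ℕ) + 1 = i then b else 0

theorem tridiagonal_submatrix_succ (a b : R) (m : ℕ) :
    (tridiagonal a b (m + 1)).submatrix Fin.succ Fin.succ = tridiagonal a b m := by
  ext i j
  simp [tridiagonal]

theorem det_tridiagonal_succ_succ (a b : R) (m : ℕ) :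
    (tridiagonal a b (m + 2)).det =
      a * (tridiagonal a b (m + 1)).det - b ^ 2 * (tridiagonal a b m).det := by
  have hminor : ((tridiagonal a b (m + 2)).submatrix Fin.succ (Fin.succAbove 1)).det =
      b * (tridiagonal a b m).det := by
    rw [det_succ_column_of_eq_zero _ 0 0 fun i hi => ?_]
    · have hcols : Fin.succAbove 1 ∘ Fin.succ = Fin.succ ∘ @Fin.succ m := by
        ext j
        simp
      rw [submatrix_submatrix, Fin.succAbove_zero, hcols, ← submatrix_submatrix,
        tridiagonal_submatrix_succ, tridiagonal_submatrix_succ]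
      simp [tridiagonal]
    · obtain ⟨i, rfl⟩ := Fin.exists_succ_eq.2 hi
      simp [tridiagonal, Fin.ext_iff]
  rw [det_succ_row_zero, Fin.sum_univ_succ, Fin.sum_univ_succ, Fintype.sum_eq_zero _ fun j => ?_]
  · have h00 : tridiagonal a b (m + 2) 0 0 = a := by simp [tridiagonal]
    have h01 : tridiagonal a b (m + 2) 0 1 = b := by simp [tridiagonal]
    simp only [Fin.val_zero, Fin.val_one, pow_zero, pow_one, one_mul, neg_mul, add_zero,
      Fin.succAbove_zero, Fin.succ_zero_eq_one, tridiagonal_submatrix_succ, hminor, h00, h01]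
    ring
  · simp [tridiagonal, Fin.ext_iff]

theorem det_tridiagonal_two_mul_neg (c : R) : ∀ m : ℕ,
    (tridiagonal (2 * c) (-c) m).det = (m + 1) * c ^ m
  | 0 => by simp
  | 1 => by simp [tridiagonal, one_add_one_eq_two]
  | m + 2 => by
    rw [det_tridiagonal_succ_succ, det_tridiagonal_two_mul_neg c (m + 1),
      det_tridiagonal_two_mul_neg c m]
    push_cast
    ring

end Matrix

/-- The Gram matrix `Γ_n(k)` of the `n+1` vectors `a_{n-1}, …, a_1, ψ, ξ`
(entries indexed `1,…,n+1`: diagonal `2(k+n)` for the first `n-1` entries, then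
`1`, then `0`; sub/super-diagonal `-(k+n)` among the first `n` positions, and
`1` coupling positions `n` and `n+1`) has determinant `-n(k+n)^{n-1}`. -/
theorem det_Gamma_asym (n : ℕ) (hn : 2 ≤ n) (k : ℂ)
    (Γ : Matrix (Fin (n + 1)) (Fin (n + 1)) ℂ)
    (hΓ : ∀ i j : Fin (n + 1), Γ i j =
      if i = j then
        (if (i : ℕ) < n - 1 then 2 * (k + n)
         else if (i : ℕ) = n - 1 then 1 else 0)
      else if ((i : ℕ) + 1 = (j : ℕ) ∧ (i : ℕ) < n - 1) ∨
              ((j : ℕ) + 1 = (i : ℕ) ∧ (j : ℕ) < n - 1) then -(k + n)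
      else if ((i : ℕ) = n - 1 ∧ (j : ℕ) = n) ∨
              ((j : ℕ) = n - 1 ∧ (i : ℕ) = n) then 1
      else 0) :
    Γ.det = -(n : ℂ) * (k + n) ^ (n - 1) := by
  obtain ⟨m, rfl⟩ : ∃ m, n = m + 1 := ⟨n - 1, by omega⟩
  have hrow : ∀ j, j ≠ (Fin.last m).castSucc → Γ (Fin.last _) j = 0 := by
    intro j hj
    simp only [hΓ, ne_eq, Fin.ext_iff, Fin.val_last, Fin.val_castSucc] at hj ⊢
    split_ifs <;> first | rfl | omega
  have hcol : ∀ i, i ≠ (Fin.last m).castSucc → Γ i (Fin.last _) = 0 := by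
    intro i hi
    simp only [hΓ, ne_eq, Fin.ext_iff, Fin.val_last, Fin.val_castSucc] at hi ⊢
    split_ifs <;> first | rfl | omega
  have hcorner :
      Γ (Fin.last _) (Fin.last m).castSucc = 1 ∧ Γ (Fin.last m).castSucc (Fin.last _) = 1 := by
    simp [hΓ, Fin.ext_iff]
  have hblock : Γ.submatrix (Fin.castSucc ∘ Fin.castSucc) (Fin.castSucc ∘ Fin.castSucc) =
      tridiagonal (2 * (k + (m + 1 : ℕ))) (-(k + (m + 1 : ℕ))) m := by
    ext i j
    simp [hΓ, tridiagonal, Fin.ext_iff, i.isLt.ne, j.isLt.ne]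
  rw [det_of_last_row_col_single Γ hrow hcol, hcorner.1, hcorner.2, hblock,
    det_tridiagonal_two_mul_neg]
  push_cast
  ring
end

section
/- Let n ≥ 2 be a natural number, k ∈ ℂ with ℓ_n(k) = ((n − 1)/n)·k + n − 2 ≠ 0, and let G' be the n×n complex matrix with entries (indices 1,…,n): G'_{i,i} = 2(k + n) for 1 ≤ i ≤ n − 2, G'_{n−1,n−1} = G'_{n,n} = 1, G'_{i,i+1} = G'_{i+1,i} = −(k + n) for 1 ≤ i ≤ n − 2, G'_{n−1,n} = G'_{n,n−1} = k + n − 1, and all other entries 0. Define c ∈ ℂ^n by c_p = −p/(n·ℓ_n(k)) for 1 ≤ p ≤ n − 1 and c_n = 1/(n·ℓ_n(k)). Then G'·c = e_{n−1} − e_n (i.e. (G'·c)_i = 0 for i ≤ n − 2, (G'·c)_{n−1} = 1, (G'·c)_n = −1), and c ⬝ (G'·c) = −1/ℓ_n(k). -/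
/-!
`G'` is the symmetric tridiagonal matrix with diagonal `(2(k+n), …, 2(k+n), 1, 1)` and
off-diagonal `(-(k+n), …, -(k+n), k+n-1)`, and `n ℓ_n(k) • c` is the vector
`v = (-1, -2, …, -(n-1), 1)`. On the even rows `G'v` is `-(k+n)` times the second difference
of the linear sequence `p ↦ -p`, hence `0`; the two odd rows give
`±((n-1)k + n(n-2)) = ±n ℓ_n(k)`.
So `G'c = e_{n-1} - e_n`, and then `c ⬝ (G'c) = c_{n-1} - c_n = -n / (n ℓ_n(k))`.
-/

open Finset

def tridiagonalEntry {R : Type*} [Zero R] (d e : ℕ → R) (i j : ℕ) : R :=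
  if i = j then d i else if i + 1 = j then e i else if j + 1 = i then e j else 0

def tridiagonal {R : Type*} [Zero R] (n : ℕ) (d e : ℕ → R) : Matrix (Fin n) (Fin n) R :=
  Matrix.of fun i j => tridiagonalEntry d e i j

theorem tridiagonal_mulVec {R : Type*} [NonUnitalNonAssocSemiring R] (n : ℕ) (d e v : ℕ → R)
    (i : Fin n) :
    (tridiagonal n d e).mulVec (fun j => v j) i =
      (if 0 < (i : ℕ) then e (i - 1) * v (i - 1) else 0) + d i * v i +
        (if (i : ℕ) + 1 < n then e i * v (i + 1) else 0) := by
  have hi := i.isLt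
  have hrow : ∀ j : ℕ, tridiagonalEntry d e i j * v j =
      ((if j = (i : ℕ) - 1 then (if 0 < (i : ℕ) then e (i - 1) * v (i - 1) else 0) else 0) +
        (if j = i then d i * v i else 0)) + (if j = (i : ℕ) + 1 then e i * v (i + 1) else 0) := by
    intro j
    unfold tridiagonalEntry
    split_ifs <;> first | omega | (subst_vars; simp)
  refine (Fin.sum_univ_eq_sum_range (fun j => tridiagonalEntry d e i j * v j) n).trans ?_
  simp [hrow, sum_add_distrib, sum_ite_eq', hi, show (i : ℕ) - 1 < n by omega]

section
variable {R : Type*} [CommRing R]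

def dressedCartanDiag (n : ℕ) (k : R) (i : ℕ) : R := if i < n - 2 then 2 * (k + n) else 1

def dressedCartanOffDiag (n : ℕ) (k : R) (i : ℕ) : R :=
  if i < n - 2 then -(k + n) else if i = n - 2 then k + n - 1 else 0

def dressedCartan (n : ℕ) (k : R) : Matrix (Fin n) (Fin n) R :=
  tridiagonal n (dressedCartanDiag n k) (dressedCartanOffDiag n k)

def xiNumerator (n p : ℕ) : R := if p = n - 1 then 1 else -((p : R) + 1)

def xiPairings (n : ℕ) : Fin n → R :=
  fun i => if (i : ℕ) = n - 2 then 1 else if (i : ℕ) = n - 1 then -1 else 0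

theorem dressedCartan_mulVec_xiNumerator {n : ℕ} (hn : 2 ≤ n) (k : R) :
    (dressedCartan n k).mulVec (fun p => xiNumerator n p) =
      (((n : R) - 1) * k + n * (n - 2)) • xiPairings n := by
  obtain ⟨m, rfl⟩ := Nat.exists_eq_add_of_le' hn
  ext ⟨j, hj⟩
  rw [dressedCartan, tridiagonal_mulVec]
  simp only [dressedCartanDiag, dressedCartanOffDiag, xiNumerator, xiPairings, Pi.smul_apply,
    smul_eq_mul, Nat.add_sub_cancel, Nat.add_succ_sub_one]
  -- `j = 0` separately: the first row has no left neighbour.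
  rcases j with _ | j <;> split_ifs <;>
    first | contradiction | omega | (subst_vars; push_cast; ring)

theorem dotProduct_xiPairings {n : ℕ} (hn : 2 ≤ n) (c : Fin n → R) :
    c ⬝ᵥ xiPairings n = c ⟨n - 2, by omega⟩ - c ⟨n - 1, by omega⟩ := by
  have h21 : n - 2 ≠ n - 1 := by omega
  rw [dotProduct, Fintype.sum_eq_add (⟨n - 2, by omega⟩ : Fin n) ⟨n - 1, by omega⟩
    (Fin.ne_of_val_ne h21)]
  · simp [xiPairings, h21.symm, sub_eq_add_neg]
  · rintro j ⟨h2, h1⟩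
    simp [xiPairings, Fin.val_ne_of_ne h2, Fin.val_ne_of_ne h1]
end

/-- For the dressed Cartan matrix `G'` of `sl(n|1)` with two odd roots (the
`n[1]` realization; basis `a_{n-2}, …, a_1, ψ_+, ψ_-`), the coefficient vector
`c` of `ξ` satisfies `G'·c = e_{n-1} - e_n` (encoding `ξ·a_i = 0`, `ξ·ψ_+ = 1`,
`ξ·ψ_- = -1`) and `c ⬝ (G'·c) = -1/ℓ_n(k)`. -/
theorem xi_coords_n1 (n : ℕ) (hn : 2 ≤ n) (k : ℂ)
    (l : ℂ) (hl : l = ((n : ℂ) - 1) / n * k + n - 2) (hl0 : l ≠ 0)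
    (G' : Matrix (Fin n) (Fin n) ℂ)
    (hG' : ∀ i j : Fin n, G' i j =
      if i = j then (if (i : ℕ) < n - 2 then 2 * (k + n) else 1)
      else if ((i : ℕ) + 1 = (j : ℕ) ∧ (i : ℕ) < n - 2) ∨
              ((j : ℕ) + 1 = (i : ℕ) ∧ (j : ℕ) < n - 2) then -(k + n)
      else if ((i : ℕ) = n - 2 ∧ (j : ℕ) = n - 1) ∨
              ((j : ℕ) = n - 2 ∧ (i : ℕ) = n - 1) then k + n - 1
      else 0)
    (c : Fin n → ℂ)
    (hc : ∀ p : Fin n, c p =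
      if (p : ℕ) = n - 1 then 1 / (n * l) else -(((p : ℕ) + 1 : ℂ)) / (n * l)) :
    G'.mulVec c =
      (fun i : Fin n => if (i : ℕ) = n - 2 then 1
        else if (i : ℕ) = n - 1 then -1 else 0) ∧
    dotProduct c (G'.mulVec c) = -1 / l := by
  have hn0 : (n : ℂ) ≠ 0 := Nat.cast_ne_zero.mpr (by omega)
  have hnl : (n : ℂ) * l = (n - 1) * k + n * (n - 2) := by
    rw [hl]; field_simp; ring
  have hG : G' = dressedCartan n k := by
    ext i j
    rw [hG']
    simp only [dressedCartan, tridiagonal, tridiagonalEntry, dressedCartanDiag,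
      dressedCartanOffDiag, Matrix.of_apply, Fin.ext_iff]
    split_ifs <;> first | rfl | omega
  have hc' : c = (n * l)⁻¹ • fun p : Fin n => (xiNumerator n p : ℂ) := by
    ext p
    rw [hc]
    simp only [xiNumerator, Pi.smul_apply, smul_eq_mul]
    split_ifs <;> ring
  have hmulVec : G'.mulVec c = xiPairings n := by
    rw [hG, hc', Matrix.mulVec_smul, dressedCartan_mulVec_xiNumerator hn, ← hnl, smul_smul,
      inv_mul_cancel₀ (mul_ne_zero hn0 hl0), one_smul]
  refine ⟨hmulVec, ?_⟩
  rw [hmulVec, dotProduct_xiPairings hn, hc, hc]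
  simp only [show n - 2 ≠ n - 1 by omega, if_true, if_false]
  rw [Nat.cast_sub hn]
  field_simp
  ring
end

section
/- Let n ≥ 2 be a natural number, k ∈ ℂ, and let Γ be the (n+1)×(n+1) complex matrix with entries (indices 1,…,n+1): Γ_{i,i} = 2(k + n) for 1 ≤ i ≤ n − 1, Γ_{n,n} = 1, Γ_{n+1,n+1} = 0, Γ_{i,i+1} = Γ_{i+1,i} = −(k + n) for 1 ≤ i ≤ n − 1, Γ_{n,n+1} = Γ_{n+1,n} = 1, and all other entries 0. Define h ∈ ℂ^{n+1} by h_p = p/n for 1 ≤ p ≤ n − 1, h_n = 1, and h_{n+1} = ℓ_n(k) = ((n − 1)/n)·k + n − 2. Then Γ·h equals the (n+1)-th standard basis vector e_{n+1}, and h ⬝ (Γ·h) = ℓ_n(k). -/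
/-!
`Γ` is tridiagonal and, on the block `a_{n-1}, …, a_1, ψ`, the vector `h` is the arithmetic
progression `p ↦ p / n`, so every `a`-row of `Γ h` is `(k + n)` times a second difference of a
linear function and vanishes. The `ψ`-row is `-(k + n)(n - 1)/n + 1 + ℓ`, which vanishes by the
very formula for `ℓ = ℓ_n(k)`, and the `ξ`-row reads off `h_ψ = 1`. Hence `Γ h = e_{n+1}` and
`h ⬝ Γ h = h_ξ = ℓ`.
-/

open Matrix

noncomputable def gramAsym (n : ℕ) (k : ℂ) : Matrix (Fin (n + 1)) (Fin (n + 1)) ℂ :=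
  Matrix.of fun i j =>
    if i = j then
      (if (i : ℕ) < n - 1 then 2 * (k + n)
       else if (i : ℕ) = n - 1 then 1 else 0)
    else if ((i : ℕ) + 1 = (j : ℕ) ∧ (i : ℕ) < n - 1) ∨
            ((j : ℕ) + 1 = (i : ℕ) ∧ (j : ℕ) < n - 1) then -(k + n)
    else if ((i : ℕ) = n - 1 ∧ (j : ℕ) = n) ∨
            ((j : ℕ) = n - 1 ∧ (i : ℕ) = n) then 1
    else 0

noncomputable def heisenbergCoords (n : ℕ) (l : ℂ) : Fin (n + 1) → ℂ := fun i =>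
  if (i : ℕ) + 1 ≤ n - 1 then (((i : ℕ) + 1 : ℕ) : ℂ) / n
  else if (i : ℕ) + 1 = n then 1
  else l

variable {n : ℕ} {k l : ℂ}

lemma gramAsym_row_zero (hn : 2 ≤ n) :
    gramAsym n k ⟨0, by omega⟩ =
      (2 * (k + n)) • Pi.single ⟨0, by omega⟩ 1
        + (-(k + n)) • Pi.single ⟨1, by omega⟩ 1 := by
  funext j
  simp only [gramAsym, of_apply, Pi.add_apply, Pi.smul_apply, Pi.single_apply, Fin.ext_iff,
    smul_eq_mul]
  split_ifs <;> grind

lemma gramAsym_row_of_pos {i : ℕ} (hi₀ : 0 < i) (hi : i + 1 < n) :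
    gramAsym n k ⟨i, by omega⟩ =
      (-(k + n)) • Pi.single ⟨i - 1, by omega⟩ 1
        + (2 * (k + n)) • Pi.single ⟨i, by omega⟩ 1
        + (-(k + n)) • Pi.single ⟨i + 1, by omega⟩ 1 := by
  funext j
  simp only [gramAsym, of_apply, Pi.add_apply, Pi.smul_apply, Pi.single_apply, Fin.ext_iff,
    smul_eq_mul]
  split_ifs <;> grind

lemma gramAsym_row_pred (hn : 2 ≤ n) :
    gramAsym n k ⟨n - 1, by omega⟩ =
      (-(k + n)) • Pi.single ⟨n - 2, by omega⟩ 1 + Pi.single ⟨n - 1, by omega⟩ 1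
        + Pi.single (Fin.last n) 1 := by
  funext j
  simp only [gramAsym, of_apply, Pi.add_apply, Pi.smul_apply, Pi.single_apply, Fin.ext_iff,
    smul_eq_mul, Fin.val_last]
  split_ifs <;> grind

lemma gramAsym_row_last (hn : 1 ≤ n) :
    gramAsym n k (Fin.last n) = Pi.single ⟨n - 1, by omega⟩ 1 := by
  funext j
  simp only [gramAsym, of_apply, Pi.single_apply, Fin.ext_iff, Fin.val_last]
  split_ifs <;> grind

lemma heisenbergCoords_of_lt {i : ℕ} (hi : i < n) :
    heisenbergCoords n l ⟨i, by omega⟩ = ((i : ℂ) + 1) / n := by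
  have hn : (n : ℂ) ≠ 0 := by exact_mod_cast (show n ≠ 0 by omega)
  simp only [heisenbergCoords]
  split_ifs with h₁ h₂
  · push_cast; rfl
  · rw [← Nat.cast_add_one, h₂, div_self hn]
  · omega

lemma heisenbergCoords_last : heisenbergCoords n l (Fin.last n) = l := by
  simp [heisenbergCoords]

theorem gramAsym_mulVec_heisenbergCoords (hn : 2 ≤ n) (hl : l = ((n : ℂ) - 1) / n * k + n - 2) :
    gramAsym n k *ᵥ heisenbergCoords n l = Pi.single (Fin.last n) 1 := by
  have hn₀ : (n : ℂ) ≠ 0 := by exact_mod_cast (show n ≠ 0 by omega)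
  ext ⟨i, hi⟩
  obtain rfl | ⟨hi₀, hi'⟩ | rfl | hi_eq :
      i = 0 ∨ 0 < i ∧ i + 1 < n ∨ i = n - 1 ∨ i = n := by omega
  · rw [mulVec, gramAsym_row_zero hn]
    simp only [add_dotProduct, smul_dotProduct, single_dotProduct, smul_eq_mul, one_mul,
      heisenbergCoords_of_lt (show 0 < n by omega), heisenbergCoords_of_lt (show 1 < n by omega)]
    rw [Pi.single_apply, if_neg (by simp [Fin.ext_iff]; omega)]
    field_simp
    ring
  · rw [mulVec, gramAsym_row_of_pos hi₀ hi']
    simp only [add_dotProduct, smul_dotProduct, single_dotProduct, smul_eq_mul, one_mul,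
      heisenbergCoords_of_lt (show i - 1 < n by omega),
      heisenbergCoords_of_lt (show i < n by omega),
      heisenbergCoords_of_lt (show i + 1 < n by omega)]
    rw [Pi.single_apply, if_neg (by simp [Fin.ext_iff]; omega), Nat.cast_pred hi₀]
    push_cast
    field_simp
    ring
  · rw [mulVec, gramAsym_row_pred hn]
    simp only [add_dotProduct, smul_dotProduct, single_dotProduct, smul_eq_mul, one_mul,
      heisenbergCoords_last, heisenbergCoords_of_lt (show n - 2 < n by omega),
      heisenbergCoords_of_lt (show n - 1 < n by omega)]
    rw [Pi.single_apply, if_neg (by simp [Fin.ext_iff]; omega), Nat.cast_sub hn,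
      Nat.cast_pred (by omega), hl]
    field_simp
    ring
  · subst i
    rw [show (⟨n, hi⟩ : Fin (n + 1)) = Fin.last n from rfl, mulVec,
      gramAsym_row_last (by omega),
      single_dotProduct, heisenbergCoords_of_lt (by omega)]
    simp [Nat.cast_pred (show 0 < n by omega), hn₀]

/-- The coefficient vector `h` of the Heisenberg current `ℋ` of the maximally
asymmetric (`n[0]`) realization of `W^{(2)}_n(k)` in the ordered basis
`a_{n-1}, …, a_1, ψ, ξ` satisfies `Γ·h = e_{n+1}` and `h ⬝ (Γ·h) = ℓ_n(k)`,
where `Γ = Γ_n(k)` is the corresponding Gram matrix. -/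
theorem heisenberg_coords_asym (n : ℕ) (hn : 2 ≤ n) (k : ℂ)
    (l : ℂ) (hl : l = ((n : ℂ) - 1) / n * k + n - 2)
    (Γ : Matrix (Fin (n + 1)) (Fin (n + 1)) ℂ)
    (hΓ : ∀ i j : Fin (n + 1), Γ i j =
      if i = j then
        (if (i : ℕ) < n - 1 then 2 * (k + n)
         else if (i : ℕ) = n - 1 then 1 else 0)
      else if ((i : ℕ) + 1 = (j : ℕ) ∧ (i : ℕ) < n - 1) ∨
              ((j : ℕ) + 1 = (i : ℕ) ∧ (j : ℕ) < n - 1) then -(k + n)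
      else if ((i : ℕ) = n - 1 ∧ (j : ℕ) = n) ∨
              ((j : ℕ) = n - 1 ∧ (i : ℕ) = n) then 1
      else 0)
    (h : Fin (n + 1) → ℂ)
    (hh : ∀ i : Fin (n + 1), h i =
      if (i : ℕ) + 1 ≤ n - 1 then (((i : ℕ) + 1 : ℕ) : ℂ) / n
      else if (i : ℕ) + 1 = n then 1
      else l) :
    Γ.mulVec h = (fun i : Fin (n + 1) => if (i : ℕ) = n then 1 else 0) ∧
    dotProduct h (Γ.mulVec h) = l := by
  obtain rfl : Γ = gramAsym n k := Matrix.ext hΓ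
  obtain rfl : h = heisenbergCoords n l := funext hh
  have hΓh := gramAsym_mulVec_heisenbergCoords hn hl
  refine ⟨?_, ?_⟩
  · ext i
    simp [hΓh, Pi.single_apply, Fin.ext_iff]
  · rw [hΓh, dotProduct_single, heisenbergCoords_last, mul_one]
end

section
/- Let n ≥ 2 and 1 ≤ m ≤ n − 1 be natural numbers, k ∈ ℂ with k ≠ −n, K = k + n, and let Γ be the (n+1)×(n+1) matrix of the n[m] realization: Γ_{p,p} = 2K for p ∈ {1,…,n} ∖ {n−m, n−m+1}, Γ_{n−m,n−m} = Γ_{n−m+1,n−m+1} = 1, Γ_{n+1,n+1} = 0, Γ_{p,p+1} = Γ_{p+1,p} = −K for 1 ≤ p ≤ n − 1 with p ≠ n − m, Γ_{n−m,n−m+1} = Γ_{n−m+1,n−m} = K − 1, Γ_{n−m,n+1} = Γ_{n+1,n−m} = 1, Γ_{n−m+1,n+1} = Γ_{n+1,n−m+1} = −1, all other entries 0. Define c ∈ ℂ^{n+1} by c_p = (n − p)/(n·K) for 1 ≤ p ≤ n − m, c_q = (n + 1 − q)/(n·K) for n − m + 1 ≤ q ≤ n, and c_{n+1} = 1/n.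 Then: (i) Γ·c equals the first standard basis vector e_1; in particular (ii) (Γ·c)_{n+1} = 0, (iii) c ⬝ (Γ·c) = (n − 1)/(n(k + n)), and (iv) h ⬝ (Γ·c) = 1/n, where h ∈ ℂ^{n+1} is given by h_p = p/n for 1 ≤ p ≤ n − m, h_q = (q − n − 1)/n for n − m + 1 ≤ q ≤ n, h_{n+1} = ((n − 1)/n)·k + n − 2. -/
/-!
In the 1-based numbering used here, `M = n - m`, the indices `M` and `M + 1` are `ψ₊` and `ψ₋`,
and `n + 1` is `ξ`. Away from `ψ±`, `Γ` is the tridiagonal matrix with rows `(-K, 2K, -K)`, and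
`ξ` only meets `ψ₊` and `ψ₋`, with opposite signs. The vector `c` is affine with slope `-1/(nK)`
on each of the blocks `1, …, M` and `M + 1, …, n`, so the tridiagonal rows annihilate it (in row
`n` the entry towards `ξ` is `0`, the value of the affine extension there); in the first row the
missing left neighbour leaves `K · c₀ = K · n/(nK) = 1`. The rows of `ψ±` and `ξ` are checked
directly, the latter being `c_M - c_{M+1} = 0`. Conclusions (ii)–(iv) then only read off `c₁` and `h₁`.
-/

open Finset

variable {𝕜 : Type*} [Field 𝕜]

def gramEntry (n M : ℕ) (k : 𝕜) (p q : ℕ) : 𝕜 :=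
  if p = q then
    (if p = M ∨ p = M + 1 then 1 else if p = n + 1 then 0 else 2 * (k + n))
  else if (p + 1 = q ∧ p ≤ n - 1 ∧ p ≠ M) ∨ (q + 1 = p ∧ q ≤ n - 1 ∧ q ≠ M) then -(k + n)
  else if (p = M ∧ q = M + 1) ∨ (q = M ∧ p = M + 1) then k + n - 1
  else if (p = M ∧ q = n + 1) ∨ (q = M ∧ p = n + 1) then 1
  else if (p = M + 1 ∧ q = n + 1) ∨ (q = M + 1 ∧ p = n + 1) then -1
  else 0

def gramDiag (n M : ℕ) (k : 𝕜) (p : ℕ) : 𝕜 :=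
  if p = M ∨ p = M + 1 then 1 else if p = n + 1 then 0 else 2 * (k + n)

def gramSuperdiag (n M : ℕ) (k : 𝕜) (p : ℕ) : 𝕜 :=
  if p = M then k + n - 1 else if p ≤ n - 1 then -(k + n) else 0

def xiCoupling (M p : ℕ) : 𝕜 :=
  (if p = M then 1 else 0) - (if p = M + 1 then 1 else 0)

def momentumCoord (n M : ℕ) (k : 𝕜) (q : ℕ) : 𝕜 :=
  if q ≤ M then ((n : 𝕜) - q) / (n * (k + n))
  else if q ≤ n then ((n : 𝕜) + 1 - q) / (n * (k + n))
  else 1 / n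

section

variable {n M : ℕ}

theorem gramEntry_eq_sum_ite (hM : 1 ≤ M) (hMn : M + 1 ≤ n) (k : 𝕜) {p q : ℕ} (hq : 1 ≤ q)
    (hqn : q ≤ n + 1) :
    gramEntry n M k p q =
      (if q = p then gramDiag n M k p else 0) + (if q = p + 1 then gramSuperdiag n M k p else 0)
      + (if q = p - 1 then gramSuperdiag n M k q else 0)
      + (if q = n + 1 then xiCoupling M p else 0) + (if p = n + 1 then xiCoupling M q else 0) := by
  unfold gramEntry gramDiag gramSuperdiag xiCoupling
  rcases (show q = p ∨ q = p + 1 ∨ q + 1 = p ∨ (q ≠ p ∧ q ≠ p + 1 ∧ q + 1 ≠ p) by omega)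
    with h | h | h | h <;>
  simp (disch := omega) only [if_pos, if_neg] <;>
  split_ifs <;> first | omega | ring

theorem sum_gramEntry_mul (hM : 1 ≤ M) (hMn : M + 1 ≤ n) (k : 𝕜) (p : ℕ) (v : ℕ → 𝕜) :
    ∑ q ∈ Icc 1 (n + 1), gramEntry n M k p q * v q =
      (if p ∈ Icc 1 (n + 1) then gramDiag n M k p * v p else 0)
      + (if p + 1 ∈ Icc 1 (n + 1) then gramSuperdiag n M k p * v (p + 1) else 0)
      + (if p - 1 ∈ Icc 1 (n + 1) then gramSuperdiag n M k (p - 1) * v (p - 1) else 0)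
      + xiCoupling M p * v (n + 1)
      + (if p = n + 1 then v M - v (M + 1) else 0) := by
  rw [sum_congr rfl fun q hq =>
    by rw [gramEntry_eq_sum_ite hM hMn k (mem_Icc.1 hq).1 (mem_Icc.1 hq).2]]
  simp only [add_mul, ite_mul, zero_mul, sum_add_distrib, sum_ite_eq', right_mem_Icc,
    le_add_self, if_true]
  congr 1
  split_ifs
  · simp only [xiCoupling, sub_mul, ite_mul, one_mul, zero_mul, sum_sub_distrib, sum_ite_eq',
      mem_Icc]
    simp (disch := omega) only [if_pos]
  · exact sum_const_zero

theorem sum_gramEntry_mul_momentumCoord [CharZero 𝕜] (hM : 1 ≤ M) (hMn : M + 1 ≤ n) {k : 𝕜}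
    (hk : k + n ≠ 0) {p : ℕ} (hp : 1 ≤ p) (hpn : p ≤ n + 1) :
    ∑ q ∈ Icc 1 (n + 1), gramEntry n M k p q * momentumCoord n M k q =
      if p = 1 then 1 else 0 := by
  have hn : (n : 𝕜) ≠ 0 := by exact_mod_cast (show n ≠ 0 by omega)
  rw [sum_gramEntry_mul hM hMn]
  rcases (show p = n + 1 ∨ (p = M ∧ p = 1) ∨ (p = M ∧ 1 < p) ∨ (p = M + 1 ∧ p = n)
      ∨ (p = M + 1 ∧ p < n) ∨ (p = 1 ∧ p < M) ∨ (1 < p ∧ p < M) ∨ (M + 1 < p ∧ p < n)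
      ∨ (M + 1 < p ∧ p = n) by omega)
    with rfl | ⟨rfl, rfl⟩ | ⟨rfl, h⟩ | ⟨rfl, rfl⟩ | ⟨rfl, h⟩ | ⟨rfl, h⟩ | h | h | ⟨h, rfl⟩ <;>
  simp (disch := omega) only [mem_Icc, gramDiag, gramSuperdiag, xiCoupling, momentumCoord,
    if_pos, if_neg, ↓reduceIte, true_or, or_true, Nat.cast_sub, Nat.cast_add, Nat.cast_one] <;>
  push_cast at hk <;>
  field_simp <;> ring

end

theorem Fin.sum_univ_succ_eq_sum_Icc {M : Type*} [AddCommMonoid M] {n : ℕ} (f : ℕ → M) :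
    ∑ j : Fin (n + 1), f (j + 1) = ∑ q ∈ Icc 1 (n + 1), f q := by
  rw [Fin.sum_univ_eq_sum_range (fun j => f (j + 1)), range_eq_Ico, sum_Ico_add', zero_add,
    Ico_add_one_right_eq_Icc]

theorem Vnm_momentum_coords_general (n m : ℕ) (hm1 : 1 ≤ m) (hm2 : m ≤ n - 1)
    (k : ℂ) (hk : k ≠ -(n : ℂ))
    (Γ : Matrix (Fin (n + 1)) (Fin (n + 1)) ℂ)
    (hΓ : ∀ i j : Fin (n + 1), Γ i j =
      (let p := (i : ℕ) + 1
       let q := (j : ℕ) + 1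
       if p = q then
         (if p = n - m ∨ p = n - m + 1 then 1
          else if p = n + 1 then 0 else 2 * (k + n))
       else if (p + 1 = q ∧ p ≤ n - 1 ∧ p ≠ n - m) ∨
               (q + 1 = p ∧ q ≤ n - 1 ∧ q ≠ n - m) then -(k + n)
       else if (p = n - m ∧ q = n - m + 1) ∨
               (q = n - m ∧ p = n - m + 1) then k + n - 1
       else if (p = n - m ∧ q = n + 1) ∨ (q = n - m ∧ p = n + 1) then 1
       else if (p = n - m + 1 ∧ q = n + 1) ∨
               (q = n - m + 1 ∧ p = n + 1) then -1
       else 0))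
    (c : Fin (n + 1) → ℂ)
    (hc : ∀ i : Fin (n + 1), c i =
      (let p := (i : ℕ) + 1
       if p ≤ n - m then ((n : ℂ) - p) / (n * (k + n))
       else if p ≤ n then ((n : ℂ) + 1 - p) / (n * (k + n))
       else 1 / n))
    (h : Fin (n + 1) → ℂ)
    (hh : ∀ i : Fin (n + 1), h i =
      (let p := (i : ℕ) + 1
       if p ≤ n - m then (p : ℂ) / n
       else if p ≤ n then ((p : ℂ) - n - 1) / n
       else ((n : ℂ) - 1) / n * k + n - 2)) :
    Γ.mulVec c = (fun i : Fin (n + 1) => if (i : ℕ) = 0 then 1 else 0) ∧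
    Γ.mulVec c (Fin.last n) = 0 ∧
    dotProduct c (Γ.mulVec c) = ((n : ℂ) - 1) / (n * (k + n)) ∧
    dotProduct h (Γ.mulVec c) = 1 / n := by
  have hM : 1 ≤ n - m := by omega
  have hMn : n - m + 1 ≤ n := by omega
  have hK : k + n ≠ 0 := fun h0 => hk (eq_neg_of_add_eq_zero_left h0)
  have he₁ : (fun i : Fin (n + 1) => if (i : ℕ) = 0 then (1 : ℂ) else 0) = Pi.single 0 1 := by
    funext i
    simp only [Pi.single_apply, Fin.ext_iff, Fin.val_zero]
  have hΓc : Γ.mulVec c = Pi.single 0 1 := by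
    funext i
    calc Γ.mulVec c i
        = ∑ j : Fin (n + 1), gramEntry n (n - m) k (i + 1) (j + 1)
            * momentumCoord n (n - m) k (j + 1) := by
          simp only [Matrix.mulVec, dotProduct, hΓ, hc]; rfl
      _ = if (i : ℕ) + 1 = 1 then 1 else 0 := by
          rw [Fin.sum_univ_succ_eq_sum_Icc
              (fun q => gramEntry n (n - m) k (i + 1) q * momentumCoord n (n - m) k q),
            sum_gramEntry_mul_momentumCoord hM hMn hK (by omega) (by omega)]
      _ = (Pi.single 0 1 : Fin (n + 1) → ℂ) i := by
          simp only [Pi.single_apply, Fin.ext_iff, Fin.val_zero, Nat.add_eq_right]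
  have hc₀ : c 0 = ((n : ℂ) - 1) / (n * (k + n)) := by simp [hc, hM]
  have hh₀ : h 0 = 1 / n := by simp [hh, hM]
  refine ⟨he₁ ▸ hΓc, ?_, ?_, ?_⟩
  · rw [hΓc, Pi.single_apply,
      if_neg (Fin.ext_iff.not.2 (by simp only [Fin.val_last, Fin.val_zero]; omega))]
  · rw [hΓc, dotProduct_single, hc₀, mul_one]
  · rw [hΓc, dotProduct_single, hh₀, mul_one]

/-- The coefficient vector `c` of the momentum `v_{n,m}(k)` of the vertex
operator `V_{n,m}` in the ordered basis
`a_{n-m-1}, …, a_1, ψ_+, ψ_-, a_{-1}, …, a_{-m+1}, ξ` satisfies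
(i) `Γ·c = e_1`; in particular (ii) `(Γ·c)_{n+1} = 0` (locality of `V_{n,m}`),
(iii) `c ⬝ (Γ·c) = (n-1)/(n(k+n))` (the momentum length squared), and
(iv) `h ⬝ (Γ·c) = 1/n` (the `ℋ_0`-eigenvalue), where `Γ` is the Gram matrix of
the `n[m]` realization and `h` is the coefficient vector of the Heisenberg
current. -/
theorem Vnm_momentum_coords (n m : ℕ) (hn : 2 ≤ n) (hm1 : 1 ≤ m) (hm2 : m ≤ n - 1)
    (k : ℂ) (hk : k ≠ -(n : ℂ))
    (Γ : Matrix (Fin (n + 1)) (Fin (n + 1)) ℂ)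
    (hΓ : ∀ i j : Fin (n + 1), Γ i j =
      (let p := (i : ℕ) + 1
       let q := (j : ℕ) + 1
       if p = q then
         (if p = n - m ∨ p = n - m + 1 then 1
          else if p = n + 1 then 0 else 2 * (k + n))
       else if (p + 1 = q ∧ p ≤ n - 1 ∧ p ≠ n - m) ∨
               (q + 1 = p ∧ q ≤ n - 1 ∧ q ≠ n - m) then -(k + n)
       else if (p = n - m ∧ q = n - m + 1) ∨
               (q = n - m ∧ p = n - m + 1) then k + n - 1
       else if (p = n - m ∧ q = n + 1) ∨ (q = n - m ∧ p = n + 1) then 1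
       else if (p = n - m + 1 ∧ q = n + 1) ∨
               (q = n - m + 1 ∧ p = n + 1) then -1
       else 0))
    (c : Fin (n + 1) → ℂ)
    (hc : ∀ i : Fin (n + 1), c i =
      (let p := (i : ℕ) + 1
       if p ≤ n - m then ((n : ℂ) - p) / (n * (k + n))
       else if p ≤ n then ((n : ℂ) + 1 - p) / (n * (k + n))
       else 1 / n))
    (h : Fin (n + 1) → ℂ)
    (hh : ∀ i : Fin (n + 1), h i =
      (let p := (i : ℕ) + 1
       if p ≤ n - m then (p : ℂ) / n
       else if p ≤ n then ((p : ℂ) - n - 1) / n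
       else ((n : ℂ) - 1) / n * k + n - 2)) :
    Γ.mulVec c = (fun i : Fin (n + 1) => if (i : ℕ) = 0 then 1 else 0) ∧
    Γ.mulVec c (Fin.last n) = 0 ∧
    dotProduct c (Γ.mulVec c) = ((n : ℂ) - 1) / (n * (k + n)) ∧
    dotProduct h (Γ.mulVec c) = 1 / n :=
  Vnm_momentum_coords_general n m hm1 hm2 k hk Γ hΓ c hc h hh
end
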